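/- The dissection tradeoff improves on the hybrid Schroeppel–Shamir tradeoff strictly inside the range: for every σ ∈ (0, 1/4) that is not of the form 1/ρ_ℓ, 2σ + τ(σ) < 1 (i.e., the Schroeppel–Shamir relation S²T = 2ⁿ, which corresponds to τ = 1 - 2σ, is strictly beaten), while at σ = 1/ρ_ℓ with ℓ = 1 (σ = 1/2-case boundary σ=1/4) equality τ(1/4) = 1/2 = 1 - 2·(1/4) holds. -/
import Mathlib


/-- The "magic sequence" ρ_ℓ = 1 + ℓ(ℓ+1)/2, as a real number. -/
noncomputable def rho (l : ℕ) : ℝ := 1 + (l : ℝ) * ((l : ℝ) + 1) / 2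

/-- `IsTau tau` expresses that `tau` is the tradeoff function of Dinur et al.:
`tau σ = 1/2` for `σ > 1/2`, and `tau σ = 1 - 1/(ℓ+1) - σ(ρ_ℓ-2)/(ℓ+1)`
where `ℓ ≥ 1` is the unique integer with `1/ρ_{ℓ+1} < σ ≤ 1/ρ_ℓ`. -/
def IsTau (tau : ℝ → ℝ) : Prop :=
  (∀ σ : ℝ, 1 / 2 < σ → σ ≤ 1 → tau σ = 1 / 2) ∧
  (∀ σ : ℝ, 0 < σ → σ ≤ 1 / 2 → ∀ l : ℕ, 1 ≤ l →
    1 / rho (l + 1) < σ → σ ≤ 1 / rho l →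
    tau σ = 1 - 1 / ((l : ℝ) + 1) - σ * (rho l - 2) / ((l : ℝ) + 1))

lemma rho_pos (l : ℕ) : 0 < rho l := by
  unfold rho; positivity

lemma rho_ge (l : ℕ) : (l : ℝ) + 1 ≤ rho l := by
  rcases Nat.eq_zero_or_pos l with h | h
  · simp [h, rho]
  · have h1 : (1:ℝ) ≤ (l:ℝ) := by exact_mod_cast h
    unfold rho; nlinarith

theorem tau_beats_schroeppel_shamir (tau : ℝ → ℝ) (htau : IsTau tau) :
    (∀ σ : ℝ, 0 < σ → σ < 1 / 4 → (∀ l : ℕ, 1 ≤ l → σ ≠ 1 / rho l) →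
      2 * σ + tau σ < 1) ∧
    tau (1 / 4) = 1 / 2 ∧ tau (1 / 4) = 1 - 2 * (1 / 4) := by
  obtain ⟨h1, h2⟩ := htau
  have htau14 : tau (1 / 4) = 1 / 2 := by
    have := h2 (1/4) (by norm_num) (by norm_num) 2 (by norm_num)
      (by norm_num [rho]) (by norm_num [rho])
    rw [this]; norm_num [rho]
  refine ⟨?_, htau14, by rw [htau14]; norm_num⟩
  intro σ hσ0 hσ4 hne
  classical
  set N := ⌈1/σ⌉₊ with hN
  have hσinv : (4:ℝ) < 1/σ := by
    rw [lt_div_iff₀ hσ0]; linarith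
  have hNσ : 1/σ ≤ (N:ℝ) := Nat.le_ceil _
  have hN4 : 4 ≤ N := by
    by_contra h
    push_neg at h
    have : (N:ℝ) < 4 := by exact_mod_cast (by omega : N < 4)
    linarith
  set P : ℕ → Prop := fun l => rho l ≤ 1/σ with hPdef
  have hP2 : P 2 := by
    show rho 2 ≤ 1/σ
    have h4 : rho 2 = 4 := by norm_num [rho]
    rw [h4]; linarith
  have hbig : ∀ m : ℕ, N < m → ¬ P m := by
    intro m hm hPm
    have h1m : (N:ℝ) < (m:ℝ) := by exact_mod_cast hm
    have := rho_ge m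
    have : rho m > 1/σ := by linarith
    exact absurd hPm (by simpa [hPdef] using not_le.mpr this)
  set l := Nat.findGreatest P N with hl
  have hl2 : 2 ≤ l := Nat.le_findGreatest (by omega) hP2
  have hPl : P l := Nat.findGreatest_spec (m := 2) (by omega) hP2
  have hnPl : ¬ P (l + 1) := by
    by_cases h : l + 1 ≤ N
    · exact Nat.findGreatest_is_greatest (by omega) h
    · exact hbig _ (by omega)
  have hρl : 0 < rho l := rho_pos l
  have hρl1 : 0 < rho (l+1) := rho_pos (l+1)
  have hupper : σ ≤ 1 / rho l := by
    rw [le_div_iff₀ hρl]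
    have : rho l * σ ≤ 1 := by
      have := (le_div_iff₀ hσ0).mp hPl
      linarith
    linarith [this]
  have hlower : 1 / rho (l+1) < σ := by
    rw [div_lt_iff₀ hρl1]
    have h' : 1/σ < rho (l+1) := not_le.mp hnPl
    have := (div_lt_iff₀ hσ0).mp h'
    linarith
  have hτ := h2 σ hσ0 (by linarith) l (by omega) hlower hupper
  rw [hτ]
  -- strict: σ ≠ 1/ρ l
  have hstrict : σ < 1 / rho l := lt_of_le_of_ne hupper (hne l (by omega))
  have hσρ : σ * rho l < 1 := by
    have := (lt_div_iff₀ hρl).mp hstrict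
    linarith
  have hlR : (2:ℝ) ≤ (l:ℝ) := by exact_mod_cast hl2
  have hl1pos : (0:ℝ) < (l:ℝ) + 1 := by linarith
  rw [rho] at hσρ ⊢
  have hprod : 0 ≤ σ * (((l:ℝ) - 2) * ((l:ℝ) + 1)) :=
    mul_nonneg hσ0.le (mul_nonneg (by linarith) (by linarith))
  have e : 2 * σ + (1 - 1 / ((l:ℝ) + 1) - σ * (1 + (l:ℝ) * ((l:ℝ) + 1) / 2 - 2) / ((l:ℝ) + 1))
      = 1 + (2 * σ * ((l:ℝ) + 1) - 1 - σ * (1 + (l:ℝ) * ((l:ℝ) + 1) / 2 - 2)) / ((l:ℝ) + 1) := by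
    field_simp
    ring
  rw [e]
  have hnum : 2 * σ * ((l:ℝ) + 1) - 1 - σ * (1 + (l:ℝ) * ((l:ℝ) + 1) / 2 - 2) < 0 := by
    nlinarith [hσρ, hprod]
  have := div_neg_of_neg_of_pos hnum hl1pos
  linarith
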